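/- Let f ∈ 1-AC(ℝⁿ,ℝˡ) and let v = e₁ + e₂ + … + e_n. Then the set E = { u ∈ ℝⁿ : limsup_{t→0} |f(u + tv) − f(u)| / |t| = ∞ } has n-dimensional Lebesgue measure zero. -/

import Mathlib

/-!
Apply the Vitali covering theorem to the diagonal cubes with opposite corners `u` and `u + t v`
(`t` of either sign) on which `‖f (u + t v) - f u‖ > M |t|`. These cubes are 1-regular, so if a
finite disjoint subfamily has total volume `∑ |t|ⁿ` below the threshold `δ` that 1-AC provides
for `ε = 1`, then `Mⁿ ∑ |t|ⁿ < ∑ ‖f (u + t v) - f u‖ⁿ < 1`, and `Mⁿ ≥ 2 / δ` pushes the volume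
below `δ / 2`. As every single cube has volume `< δ / 2`, adding the cubes one at a time never
crosses the gap `[δ / 2, δ)`; so the whole disjoint cover, which carries almost all of the bad
set, has volume at most `δ / 2`, and `δ` can be taken arbitrarily small.
-/

open MeasureTheory Metric Set Filter

noncomputable section

def box {n : ℕ} (a b : EuclideanSpace ℝ (Fin n)) : Set (EuclideanSpace ℝ (Fin n)) :=
  {x | ∀ ν, a ν ≤ x ν ∧ x ν ≤ b ν}

def OneAC {n l : ℕ} (f : EuclideanSpace ℝ (Fin n) → EuclideanSpace ℝ (Fin l)) : Prop :=
  ∀ ε > 0, ∃ δ > 0, ∀ (k : ℕ) (a b : Fin k → EuclideanSpace ℝ (Fin n)),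
    (∀ i, ∀ ν, a i ν ≤ b i ν) →
    (Pairwise fun i j => Disjoint (box (a i) (b i)) (box (a j) (b j))) →
    (∀ i, (⨆ ν, |a i ν - b i ν|) ^ n ≤ (volume (box (a i) (b i))).toReal) →
    ∑ i, (volume (box (a i) (b i))).toReal < δ →
    ∑ i, ‖f (b i) - f (a i)‖ ^ n < ε

open scoped Topology

namespace Finset

theorem sum_lt_of_forall_subset_sum_lt_two_mul {ι : Type*} (s : Finset ι) (w : ι → ℝ) {a : ℝ}
    (ha : 0 < a) (hw : ∀ i ∈ s, w i < a)
    (hgap : ∀ t ⊆ s, ∑ i ∈ t, w i < 2 * a → ∑ i ∈ t, w i < a) :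
    ∑ i ∈ s, w i < a := by
  classical
  induction s using Finset.induction_on with
  | empty => simpa using ha
  | insert i t hi ih =>
    have ht : ∑ j ∈ t, w j < a :=
      ih (fun j hj => hw j (mem_insert_of_mem hj))
        (fun t' ht' => hgap t' (ht'.trans (subset_insert i t)))
    refine hgap _ Subset.rfl ?_
    rw [sum_insert hi]
    linarith [hw i (mem_insert_self i t)]

end Finset

section DiagonalCubes

variable {n : ℕ}

abbrev diag (n : ℕ) : EuclideanSpace ℝ (Fin n) := ∑ i, EuclideanSpace.single i (1 : ℝ)

@[simp]
theorem add_smul_diag_apply (u : EuclideanSpace ℝ (Fin n)) (c : ℝ) (ν : Fin n) :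
    (u + c • diag n) ν = u ν + c := by
  simp

theorem box_eq_preimage_ofLp (a b : EuclideanSpace ℝ (Fin n)) :
    box a b = WithLp.ofLp ⁻¹' Icc (WithLp.ofLp a) (WithLp.ofLp b) := by
  ext x
  simp [box, Pi.le_def, forall_and]

theorem volume_box (a b : EuclideanSpace ℝ (Fin n)) :
    volume (box a b) = ∏ ν, ENNReal.ofReal (b ν - a ν) := by
  rw [box_eq_preimage_ofLp, (PiLp.volume_preserving_ofLp _).measure_preimage
    measurableSet_Icc.nullMeasurableSet]
  exact Real.volume_Icc_pi

theorem isClosed_box (a b : EuclideanSpace ℝ (Fin n)) : IsClosed (box a b) := by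
  rw [box_eq_preimage_ofLp]
  exact isClosed_Icc.preimage (PiLp.continuous_ofLp 2 _)

theorem volume_closedBall_le (u : EuclideanSpace ℝ (Fin n)) (ρ : ℝ) :
    volume (closedBall u ρ) ≤ ENNReal.ofReal (2 * ρ) ^ n := by
  calc volume (closedBall u ρ) ≤ volume (box (u + (-ρ) • diag n) (u + ρ • diag n)) := by
        refine measure_mono fun x hx ν => ?_
        have hν : |x ν - u ν| ≤ ρ := by
          simpa [← Real.dist_eq] using (PiLp.dist_apply_le x u ν).trans (mem_closedBall.1 hx)
        rw [abs_le] at hν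
        simp only [add_smul_diag_apply]
        constructor <;> linarith
    _ = ENNReal.ofReal (2 * ρ) ^ n := by
        simp [volume_box, two_mul]

theorem dist_le_sqrt_mul_of_forall_abs_sub_le {x y : EuclideanSpace ℝ (Fin n)} {c : ℝ}
    (hc : 0 ≤ c) (h : ∀ ν, |x ν - y ν| ≤ c) : dist x y ≤ √n * c := by
  calc dist x y = √(∑ ν, |x ν - y ν| ^ 2) := by simp [EuclideanSpace.dist_eq, Real.dist_eq]
    _ ≤ √(∑ _ν : Fin n, c ^ 2) :=
        Real.sqrt_le_sqrt (Finset.sum_le_sum fun ν _ => pow_le_pow_left₀ (abs_nonneg _) (h ν) 2)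
    _ = √n * c := by simp [Real.sqrt_mul, Real.sqrt_sq hc]

def diagCube (u : EuclideanSpace ℝ (Fin n)) (t : ℝ) : Set (EuclideanSpace ℝ (Fin n)) :=
  box (u + min t 0 • diag n) (u + max t 0 • diag n)

theorem volume_diagCube (u : EuclideanSpace ℝ (Fin n)) (t : ℝ) :
    volume (diagCube u t) = ENNReal.ofReal (|t| ^ n) := by
  simp [diagCube, volume_box, max_sub_min_eq_abs', ENNReal.ofReal_pow (abs_nonneg t)]

theorem isClosed_diagCube (u : EuclideanSpace ℝ (Fin n)) (t : ℝ) : IsClosed (diagCube u t) :=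
  isClosed_box _ _

theorem diagCube_subset_closedBall (u : EuclideanSpace ℝ (Fin n)) (t : ℝ) :
    diagCube u t ⊆ closedBall u (√n * |t|) := by
  intro x hx
  refine mem_closedBall.2 (dist_le_sqrt_mul_of_forall_abs_sub_le (abs_nonneg t) fun ν => ?_)
  have hν := hx ν
  simp only [add_smul_diag_apply] at hν
  rw [abs_le]
  constructor <;> cases abs_cases t <;> cases min_cases t 0 <;> cases max_cases t 0 <;> linarith

theorem ball_subset_diagCube (u : EuclideanSpace ℝ (Fin n)) (t : ℝ) :
    ball (u + (t / 2) • diag n) (|t| / 2) ⊆ diagCube u t := by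
  intro x hx ν
  have hν : |x ν - (u ν + t / 2)| < |t| / 2 := by
    simpa [← Real.dist_eq] using (PiLp.dist_apply_le x _ ν).trans_lt (mem_ball.1 hx)
  rw [abs_lt] at hν
  simp only [add_smul_diag_apply]
  constructor <;> cases abs_cases t <;> cases min_cases t 0 <;> cases max_cases t 0 <;> linarith

theorem interior_diagCube_nonempty (u : EuclideanSpace ℝ (Fin n)) {t : ℝ} (ht : t ≠ 0) :
    (interior (diagCube u t)).Nonempty :=
  (nonempty_ball.2 (half_pos (abs_pos.2 ht))).mono
    (interior_maximal (ball_subset_diagCube u t) isOpen_ball)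

theorem volume_closedBall_three_mul_le (u : EuclideanSpace ℝ (Fin n)) (t : ℝ) :
    volume (closedBall u (3 * (√n * |t|))) ≤
      ((6 * √n) ^ n).toNNReal * volume (diagCube u t) := by
  calc volume (closedBall u (3 * (√n * |t|))) ≤ ENNReal.ofReal (6 * √n * |t|) ^ n := by
        convert volume_closedBall_le u _ using 3; ring
    _ = ((6 * √n) ^ n).toNNReal * volume (diagCube u t) := by
        rw [volume_diagCube, ← ENNReal.ofReal_pow (by positivity), mul_pow,
          ENNReal.ofReal_mul (by positivity)]
        rfl

theorem exists_pairwiseDisjoint_diagCube_volume_le_tsum (S : Set (EuclideanSpace ℝ (Fin n)))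
    (T : Set (EuclideanSpace ℝ (Fin n) × ℝ)) (hT : ∀ p ∈ T, p.2 ≠ 0)
    (hfine : ∀ x ∈ S, ∀ ε > (0 : ℝ), ∃ t, (x, t) ∈ T ∧ |t| ≤ ε) :
    ∃ U ⊆ T, U.PairwiseDisjoint (fun p => diagCube p.1 p.2) ∧
      volume S ≤ ∑' p : U, ENNReal.ofReal (|(p : EuclideanSpace ℝ (Fin n) × ℝ).2| ^ n) := by
  have hfine' : ∀ x ∈ S, ∀ ε > (0 : ℝ), ∃ p ∈ T, √n * |p.2| ≤ ε ∧ p.1 = x := by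
    intro x hx ε hε
    obtain ⟨t, hxt, ht⟩ := hfine x hx (ε / (√n + 1)) (by positivity)
    refine ⟨(x, t), hxt, ?_, rfl⟩
    calc √n * |t| ≤ (√n + 1) * |t| := by gcongr; linarith
      _ ≤ ε := by rwa [le_div_iff₀' (by positivity)] at ht
  obtain ⟨U, hUT, hUc, hUd, hUcov⟩ := Vitali.exists_disjoint_covering_ae volume S T
    ((6 * √n) ^ n).toNNReal (fun p => √n * |p.2|) Prod.fst (fun p => diagCube p.1 p.2)
    (fun p _ => diagCube_subset_closedBall p.1 p.2)
    (fun p _ => volume_closedBall_three_mul_le p.1 p.2)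
    (fun p hp => interior_diagCube_nonempty p.1 (hT p hp))
    (fun p _ => isClosed_diagCube p.1 p.2) hfine'
  refine ⟨U, hUT, hUd, ?_⟩
  calc volume S ≤ volume (⋃ p ∈ U, diagCube p.1 p.2) := measure_mono_ae (ae_le_set.2 hUcov)
    _ ≤ ∑' p : U, volume (diagCube p.1.1 p.1.2) := measure_biUnion_le volume hUc _
    _ = _ := by simp only [volume_diagCube]

end DiagonalCubes

section OneAC

variable {n l : ℕ}

theorem norm_sub_diagCube_corners {X : Type*} [SeminormedAddCommGroup X]
    (f : EuclideanSpace ℝ (Fin n) → X) (u : EuclideanSpace ℝ (Fin n)) (t : ℝ) :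
    ‖f (u + max t 0 • diag n) - f (u + min t 0 • diag n)‖ = ‖f (u + t • diag n) - f u‖ := by
  rcases le_total 0 t with h | h
  · simp [h]
  · simp [h, norm_sub_rev]

theorem diagCube_oneRegular (u : EuclideanSpace ℝ (Fin n)) (t : ℝ) :
    (⨆ ν, |(u + min t 0 • diag n) ν - (u + max t 0 • diag n) ν|) ^ n ≤
      (volume (diagCube u t)).toReal := by
  rw [volume_diagCube, ENNReal.toReal_ofReal (by positivity)]
  refine pow_le_pow_left₀ (Real.iSup_nonneg fun _ => abs_nonneg _) ?_ n
  refine Real.iSup_le (fun ν => le_of_eq ?_) (abs_nonneg t)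
  rw [add_smul_diag_apply, add_smul_diag_apply, abs_sub_comm, add_sub_add_left_eq_sub,
    max_sub_min_eq_abs', sub_zero, abs_abs]

theorem OneAC.exists_diagCube_sum_norm_pow_lt
    {f : EuclideanSpace ℝ (Fin n) → EuclideanSpace ℝ (Fin l)} (hf : OneAC f) {ε : ℝ} (hε : 0 < ε) :
    ∃ δ > 0, ∀ {ι : Type*} (s : Finset ι) (c : ι → EuclideanSpace ℝ (Fin n)) (t : ι → ℝ),
      (s : Set ι).PairwiseDisjoint (fun i => diagCube (c i) (t i)) →
      ∑ i ∈ s, |t i| ^ n < δ → ∑ i ∈ s, ‖f (c i + t i • diag n) - f (c i)‖ ^ n < ε := by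
  obtain ⟨δ, hδ, hAC⟩ := hf ε hε
  refine ⟨δ, hδ, fun {ι} s c t hdisj hsum => ?_⟩
  set e := s.equivFin.symm
  have reindex (φ : ι → ℝ) : ∑ k, φ (e k) = ∑ i ∈ s, φ i :=
    (e.sum_comp (φ ·)).trans (s.sum_coe_sort φ)
  have hvol : ∑ k, (volume (diagCube (c (e k)) (t (e k)))).toReal < δ := by
    simpa only [volume_diagCube, ENNReal.toReal_ofReal (pow_nonneg (abs_nonneg _) n),
      reindex (fun i => |t i| ^ n)] using hsum
  rw [← reindex]
  simpa only [norm_sub_diagCube_corners] using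
    hAC s.card (fun k => c (e k) + min (t (e k)) 0 • diag n)
      (fun k => c (e k) + max (t (e k)) 0 • diag n)
      (fun k ν => by simp)
      (fun k k' hkk' => hdisj (e k).2 (e k').2 (Subtype.coe_injective.ne (e.injective.ne hkk')))
      (fun k => diagCube_oneRegular _ _) hvol

def diagSlopeUnboundedSet {X : Type*} [SeminormedAddCommGroup X]
    (f : EuclideanSpace ℝ (Fin n) → X) : Set (EuclideanSpace ℝ (Fin n)) :=
  {u | ∀ M : ℝ, ∃ᶠ t in 𝓝[≠] 0, M < ‖f (u + t • diag n) - f u‖ / |t|}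

theorem diagSlopeUnboundedSet_zero_dim_eq_empty {X : Type*} [SeminormedAddCommGroup X]
    (f : EuclideanSpace ℝ (Fin 0) → X) : diagSlopeUnboundedSet f = ∅ := by
  refine eq_empty_of_forall_notMem fun u hu => ?_
  simpa [Subsingleton.elim (diag 0) 0] using hu 0

theorem exists_small_steep_of_mem_diagSlopeUnboundedSet {X : Type*} [SeminormedAddCommGroup X]
    {f : EuclideanSpace ℝ (Fin n) → X} {u : EuclideanSpace ℝ (Fin n)}
    (hu : u ∈ diagSlopeUnboundedSet f) (hn : n ≠ 0) (M : ℝ) {ε a : ℝ} (hε : 0 < ε) (ha : 0 < a) :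
    ∃ t ≠ 0, |t| ≤ ε ∧ |t| ^ n < a ∧ M * |t| < ‖f (u + t • diag n) - f u‖ := by
  have habs : Tendsto (fun t : ℝ => |t|) (𝓝 0) (𝓝 0) := continuous_abs.tendsto' 0 0 abs_zero
  have hpow : Tendsto (fun t : ℝ => |t| ^ n) (𝓝 0) (𝓝 0) := by
    simpa [zero_pow hn] using habs.pow n
  have hsmall : ∀ᶠ t in 𝓝[≠] (0 : ℝ), t ≠ 0 ∧ |t| ≤ ε ∧ |t| ^ n < a :=
    eventually_mem_nhdsWithin.and <| nhdsWithin_le_nhds <|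
      (habs.eventually (eventually_le_nhds hε)).and (hpow.eventually (eventually_lt_nhds ha))
  obtain ⟨t, hM, ht0, htε, htn⟩ := ((hu M).and_eventually hsmall).exists
  exact ⟨t, ht0, htε, htn, (lt_div_iff₀ (abs_pos.2 ht0)).1 hM⟩

theorem OneAC.exists_sum_abs_pow_lt_half_of_steep
    {f : EuclideanSpace ℝ (Fin n) → EuclideanSpace ℝ (Fin l)} (hf : OneAC f) (hn : n ≠ 0)
    {η : ℝ} (hη : 0 < η) :
    ∃ δ > 0, δ ≤ η ∧ ∃ M : ℝ, ∀ {ι : Type*} (s : Finset ι) (c : ι → EuclideanSpace ℝ (Fin n))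
      (t : ι → ℝ), (s : Set ι).PairwiseDisjoint (fun i => diagCube (c i) (t i)) →
      (∀ i ∈ s, M * |t i| < ‖f (c i + t i • diag n) - f (c i)‖) →
      ∑ i ∈ s, |t i| ^ n < δ → ∑ i ∈ s, |t i| ^ n < δ / 2 := by
  obtain ⟨δ₀, hδ₀, hAC⟩ := hf.exists_diagCube_sum_norm_pow_lt one_pos
  refine ⟨min δ₀ η, lt_min hδ₀ hη, min_le_right _ _, max 1 (2 / min δ₀ η),
    fun s c t hdisj hsteep hsum => ?_⟩
  set δ := min δ₀ η
  set M := max 1 (2 / δ)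
  have hM : 2 / δ ≤ M ^ n := (le_max_right _ _).trans (le_self_pow₀ (le_max_left _ _) hn)
  have hMsum : M ^ n * ∑ i ∈ s, |t i| ^ n < 1 :=
    calc M ^ n * ∑ i ∈ s, |t i| ^ n = ∑ i ∈ s, (M * |t i|) ^ n := by
          simp only [Finset.mul_sum, mul_pow]
      _ ≤ ∑ i ∈ s, ‖f (c i + t i • diag n) - f (c i)‖ ^ n :=
          Finset.sum_le_sum fun i hi => pow_le_pow_left₀ (by positivity) (hsteep i hi).le n
      _ < 1 := hAC s c t hdisj (hsum.trans_le (min_le_left _ _))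
  have hδ : 0 < δ := lt_min hδ₀ hη
  calc ∑ i ∈ s, |t i| ^ n = (2 / δ * ∑ i ∈ s, |t i| ^ n) * (δ / 2) := by field_simp
    _ ≤ (M ^ n * ∑ i ∈ s, |t i| ^ n) * (δ / 2) := by gcongr
    _ < 1 * (δ / 2) := by gcongr
    _ = δ / 2 := one_mul _

theorem OneAC.volume_diagSlopeUnboundedSet_le
    {f : EuclideanSpace ℝ (Fin n) → EuclideanSpace ℝ (Fin l)} (hf : OneAC f) (hn : n ≠ 0)
    {η : ℝ} (hη : 0 < η) : volume (diagSlopeUnboundedSet f) ≤ ENNReal.ofReal η := by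
  obtain ⟨δ, hδ, hδη, M, hsteep⟩ := hf.exists_sum_abs_pow_lt_half_of_steep hn hη
  set T := {p : EuclideanSpace ℝ (Fin n) × ℝ | p.2 ≠ 0 ∧ |p.2| ^ n < δ / 2 ∧
    M * |p.2| < ‖f (p.1 + p.2 • diag n) - f p.1‖}
  have hfine (u) (hu : u ∈ diagSlopeUnboundedSet f) (ε : ℝ) (hε : ε > 0) :
      ∃ t, (u, t) ∈ T ∧ |t| ≤ ε := by
    obtain ⟨t, ht0, htε, htn, hM⟩ := exists_small_steep_of_mem_diagSlopeUnboundedSet hu hn M hε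
      (half_pos hδ)
    exact ⟨t, ⟨ht0, htn, hM⟩, htε⟩
  obtain ⟨U, hUT, hUd, hcover⟩ :=
    exists_pairwiseDisjoint_diagCube_volume_le_tsum _ T (fun p hp => hp.1) hfine
  have hfinite (s : Finset U) : ∑ p ∈ s, |p.1.2| ^ n < δ / 2 :=
    s.sum_lt_of_forall_subset_sum_lt_two_mul _ (half_pos hδ) (fun p _ => (hUT p.2).2.1)
      fun s' _ hs' => hsteep s' (fun p => p.1.1) (fun p => p.1.2)
        (fun p _ q _ hpq => hUd p.2 q.2 (Subtype.coe_injective.ne hpq))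
        (fun p _ => (hUT p.2).2.2) (by linarith)
  calc volume (diagSlopeUnboundedSet f) ≤ _ := hcover
    _ ≤ ENNReal.ofReal (δ / 2) := ENNReal.summable.tsum_le_of_sum_le fun s => by
        rw [← ENNReal.ofReal_sum_of_nonneg fun p _ => by positivity]
        exact ENNReal.ofReal_le_ofReal (hfinite s).le
    _ ≤ ENNReal.ofReal η := ENNReal.ofReal_le_ofReal (by linarith)

end OneAC

/-- For `f ∈ 1-AC(ℝⁿ,ℝˡ)` and `v = e₁ + ⋯ + e_n`, the set of points `u` where
`limsup_{t→0} |f(u+tv) − f(u)|/|t| = ∞` (i.e. the difference quotients are frequently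
larger than every `M`) has `n`-dimensional Lebesgue measure zero. -/
theorem oneAC_lip_direction_ae_finite {n l : ℕ}
    (f : EuclideanSpace ℝ (Fin n) → EuclideanSpace ℝ (Fin l)) (hf : OneAC f) :
    volume {u : EuclideanSpace ℝ (Fin n) | ∀ M : ℝ,
      ∃ᶠ t in nhdsWithin (0:ℝ) {(0:ℝ)}ᶜ,
        M < ‖f (u + t • ∑ i, EuclideanSpace.single i (1:ℝ)) - f u‖ / |t|} = 0 := by
  change volume (diagSlopeUnboundedSet f) = 0
  rcases eq_or_ne n 0 with rfl | hn
  · rw [diagSlopeUnboundedSet_zero_dim_eq_empty, measure_empty]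
  · refine le_antisymm (ENNReal.le_of_forall_pos_le_add fun ε hε _ => ?_) bot_le
    simpa using hf.volume_diagSlopeUnboundedSet_le hn (NNReal.coe_pos.2 hε)
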